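/- Let a ≥ 1 and b ≥ 2 be integers. The map T_{a,b} : Λ^{a+b} → Λ^{a+b} is not ergodic with respect to Lebesgue measure: there exists a measurable set E ⊆ Λ^{a+b} with T_{a,b}^{-1}(E) = E up to a Lebesgue-null set such that both E and Λ^{a+b}∖E have positive Lebesgue measure. -/

import Mathlib

open MeasureTheory Filter Topology

/-- `Λⁿ`: points of `ℝⁿ` with nonnegative, nondecreasing coordinates. -/
def Lambda (n : ℕ) : Set (Fin n → ℝ) := {x | (∀ i, 0 ≤ x i) ∧ Monotone x}

/-- The vector `(x₁,…,x_a, x_{a+1}-x_a,…,x_{a+b}-x_a)` (0-based indexing). -/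
noncomputable def subVec (a b : ℕ) (x : Fin (a + b) → ℝ) : Fin (a + b) → ℝ :=
  fun j => if (j : ℕ) < a then x j else x j - x ⟨a - 1, by have := j.isLt; omega⟩

/-- The map `T_{a,b}`: nondecreasing rearrangement of `subVec a b x`. -/
noncomputable def Tab (a b : ℕ) (x : Fin (a + b) → ℝ) : Fin (a + b) → ℝ :=
  subVec a b x ∘ Tuple.sort (subVec a b x)

/-!
Write `m` for the last index and `p` for the index `a` (1-based). The potential
`Φ(x) = x_m - (∑ᵢ xᵢ) / b` never decreases along `T_{a,b}`: the coordinate sum drops by exactly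
`b · x_p`, while the largest entry of `T_{a,b} x` is at least `x_m - x_p`. On `Λ`, on the other
hand, `Φ(x) ≤ x_m` and the largest coordinate never increases. So the set of points of `Λ` whose
orbit eventually enters `{Φ > 1}` is invariant, contains `Λ ∩ {Φ > 1}` and misses
`Λ ∩ {x_m < 1}`. Both of these have positive measure, being relatively open, nonempty subsets of
the convex body `Λ`.
-/

open Set

section TupleSort

variable {α : Type*} [LinearOrder α] {n : ℕ} (v : Fin n → α)

theorem le_comp_sort_of_isTop {m : Fin n} (hm : IsTop m) (i : Fin n) :
    v i ≤ (v ∘ Tuple.sort v) m := by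
  simpa using Tuple.monotone_sort v (hm ((Tuple.sort v).symm i))

theorem comp_sort_le_iff (j : Fin n) (t : α) :
    (v ∘ Tuple.sort v) j ≤ t ↔ ∃ s : Finset (Fin n), (j : ℕ) < s.card ∧ ∀ i ∈ s, v i ≤ t := by
  set σ := Tuple.sort v
  constructor
  · intro h
    refine ⟨(Finset.Iic j).map σ.toEmbedding, by simp, ?_⟩
    simp only [Finset.mem_map_equiv, Finset.mem_Iic]
    intro i hi
    simpa [σ] using (Tuple.monotone_sort v hi).trans h
  · rintro ⟨s, hs, hst⟩
    obtain ⟨p, hps, hjp⟩ : ∃ p ∈ s.map σ.symm.toEmbedding, j ≤ p := by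
      by_contra! h
      have := Finset.card_le_card fun p hp => Finset.mem_Iio.2 (h p hp)
      simp only [Finset.card_map, Fin.card_Iio] at this
      omega
    rw [Finset.mem_map_equiv, Equiv.symm_symm] at hps
    simpa using (Tuple.monotone_sort v hjp).trans (hst _ hps)

end TupleSort

theorem measurable_comp_sort (n : ℕ) : Measurable fun v : Fin n → ℝ => v ∘ Tuple.sort v := by
  refine measurable_pi_lambda _ fun j => measurable_of_Iic fun t => ?_
  have : (fun v : Fin n → ℝ => (v ∘ Tuple.sort v) j) ⁻¹' Iic t =
      ⋃ s : Finset (Fin n), ⋃ _ : (j : ℕ) < s.card, ⋂ i ∈ s, {v | v i ≤ t} := by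
    ext v
    simpa using comp_sort_le_iff v j t
  rw [this]
  exact .iUnion fun s => .iUnion fun _ => .biInter s.countable_toSet fun i _ =>
    measurableSet_le (measurable_pi_apply i) measurable_const

theorem Set.preimage_iUnion_preimage_iterate {α : Type*} {f : α → α} {A : Set α}
    (hA : MapsTo f A A) : f ⁻¹' ⋃ k, f^[k] ⁻¹' A = ⋃ k, f^[k] ⁻¹' A := by
  ext x
  simp only [mem_preimage, mem_iUnion]
  constructor
  · rintro ⟨k, hk⟩
    exact ⟨k + 1, hk⟩
  · rintro ⟨k, hk⟩
    exact ⟨k, by rw [← Function.iterate_succ_apply, Function.iterate_succ_apply']; exact hA hk⟩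

section Lambda

variable {n : ℕ}

theorem isClosed_Lambda : IsClosed (Lambda n) := by
  simp only [Lambda, ofPred_and, ofPred_forall]
  exact (isClosed_iInter fun i => isClosed_le continuous_const (continuous_apply i)).inter
    isClosed_monotone

theorem convex_Lambda : Convex ℝ (Lambda n) := by
  rintro x ⟨hx0, hx⟩ y ⟨hy0, hy⟩ s t hs ht -
  refine ⟨fun i => ?_, fun i j hij => ?_⟩
  · have := hx0 i; have := hy0 i
    simp only [Pi.add_apply, Pi.smul_apply, smul_eq_mul]
    positivity
  · simp only [Pi.add_apply, Pi.smul_apply, smul_eq_mul]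
    gcongr
    exacts [hx hij, hy hij]

theorem interior_Lambda_nonempty : (interior (Lambda n)).Nonempty := by
  refine ⟨fun i => i + 1, mem_interior_iff_mem_nhds.2 <|
    Filter.mem_of_superset (Metric.ball_mem_nhds _ one_half_pos) fun y hy => ?_⟩
  have hy' : ∀ i : Fin n, |y i - (i + 1)| < 1 / 2 := fun i => by
    simpa [Real.dist_eq] using (dist_pi_lt_iff one_half_pos).1 hy i
  refine ⟨fun i => ?_, fun i j hij => ?_⟩
  · have := abs_lt.1 (hy' i)
    have : (0 : ℝ) ≤ i := Nat.cast_nonneg _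
    linarith
  · rcases hij.eq_or_lt with rfl | hlt
    · rfl
    have : (i : ℝ) + 1 ≤ j := by exact_mod_cast hlt
    have := abs_lt.1 (hy' i); have := abs_lt.1 (hy' j)
    linarith

theorem volume_Lambda_inter_pos {U : Set (Fin n → ℝ)} (hU : IsOpen U)
    (hne : (Lambda n ∩ U).Nonempty) : 0 < volume (Lambda n ∩ U) := by
  obtain ⟨p, hpΛ, hpU⟩ := hne
  have hp : p ∈ closure (interior (Lambda n)) := by
    rw [convex_Lambda.closure_interior_eq_closure_of_nonempty_interior interior_Lambda_nonempty,
      isClosed_Lambda.closure_eq]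
    exact hpΛ
  obtain ⟨q, hqU, hqΛ⟩ := mem_closure_iff.1 hp U hU hpU
  exact (isOpen_interior.inter hU).measure_pos volume ⟨q, hqΛ, hqU⟩ |>.trans_le
    (measure_mono (inter_subset_inter_left _ interior_subset))

end Lambda

theorem single_mem_Lambda {n : ℕ} {m : Fin n} (hm : IsTop m) {t : ℝ} (ht : 0 ≤ t) :
    Pi.single m t ∈ Lambda n := by
  refine ⟨fun i => ?_, fun i j hij => ?_⟩
  · rcases eq_or_ne i m with rfl | hi <;> simp [*]
  · rcases eq_or_ne i m with rfl | hi
    · rw [le_antisymm (hm j) hij]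
    · simp [hi, Pi.single_apply, apply_ite, ht]

section Tab

variable {a b : ℕ}

theorem subVec_apply_of_lt (x : Fin (a + b) → ℝ) {j : Fin (a + b)} (hj : (j : ℕ) < a) :
    subVec a b x j = x j :=
  if_pos hj

theorem subVec_apply_of_le (x : Fin (a + b) → ℝ) {j : Fin (a + b)} (hj : a ≤ j)
    (h : a - 1 < a + b) : subVec a b x j = x j - x ⟨a - 1, h⟩ :=
  if_neg (not_lt.2 hj)

theorem sum_subVec (hb : b ≠ 0) (x : Fin (a + b) → ℝ) :
    ∑ j, subVec a b x j = ∑ j, x j - b * x ⟨a - 1, by omega⟩ := by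
  simp only [Fin.sum_univ_add, subVec_apply_of_lt x (Fin.castAdd_lt b _),
    subVec_apply_of_le x (Fin.le_coe_natAdd a _) (by omega : a - 1 < a + b),
    Finset.sum_sub_distrib, Finset.sum_const, Finset.card_univ, Fintype.card_fin, nsmul_eq_mul]
  ring

theorem subVec_nonneg {x : Fin (a + b) → ℝ} (hx : x ∈ Lambda (a + b)) (j : Fin (a + b)) :
    0 ≤ subVec a b x j := by
  rcases lt_or_ge (j : ℕ) a with hj | hj
  · rw [subVec_apply_of_lt x hj]
    exact hx.1 j
  · rw [subVec_apply_of_le x hj (by omega), sub_nonneg]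
    exact hx.2 (Fin.le_def.2 (show a - 1 ≤ (j : ℕ) by omega))

theorem subVec_le_of_isTop {x : Fin (a + b) → ℝ} (hx : x ∈ Lambda (a + b)) {m : Fin (a + b)}
    (hm : IsTop m) (j : Fin (a + b)) : subVec a b x j ≤ x m := by
  rcases lt_or_ge (j : ℕ) a with hj | hj
  · rw [subVec_apply_of_lt x hj]
    exact hx.2 (hm j)
  · rw [subVec_apply_of_le x hj (by omega)]
    linarith [hx.2 (hm j), hx.1 ⟨a - 1, by omega⟩]

theorem measurable_subVec : Measurable (subVec a b) :=
  measurable_pi_lambda _ fun j => by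
    unfold subVec
    split_ifs
    exacts [measurable_pi_apply j, (measurable_pi_apply j).sub (measurable_pi_apply _)]

theorem measurable_Tab : Measurable (Tab a b) :=
  (measurable_comp_sort _).comp measurable_subVec

theorem mapsTo_Tab : MapsTo (Tab a b) (Lambda (a + b)) (Lambda (a + b)) := fun _ hx =>
  ⟨fun _ => subVec_nonneg hx _, Tuple.monotone_sort _⟩

theorem iterate_Tab_apply_le_of_isTop {x : Fin (a + b) → ℝ} (hx : x ∈ Lambda (a + b))
    {m : Fin (a + b)} (hm : IsTop m) (k : ℕ) : (Tab a b)^[k] x m ≤ x m := by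
  induction k with
  | zero => rfl
  | succ k ih =>
    rw [Function.iterate_succ_apply']
    exact (subVec_le_of_isTop (mapsTo_Tab.iterate k hx) hm _).trans ih

end Tab

noncomputable def potential {n : ℕ} (b : ℕ) (m : Fin n) (x : Fin n → ℝ) : ℝ :=
  x m - (∑ i, x i) / b

theorem continuous_potential {n b : ℕ} (m : Fin n) : Continuous (potential b m) := by
  unfold potential
  fun_prop

theorem potential_single {n : ℕ} (b : ℕ) (m : Fin n) (t : ℝ) :
    potential b m (Pi.single m t) = t - t / b := by
  simp [potential]

theorem potential_le_apply {n : ℕ} (b : ℕ) (m : Fin n) {x : Fin n → ℝ} (hx : x ∈ Lambda n) :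
    potential b m x ≤ x m :=
  sub_le_self _ (div_nonneg (Finset.sum_nonneg fun i _ => hx.1 i) b.cast_nonneg)

theorem potential_le_potential_Tab {a b : ℕ} (hb : b ≠ 0) {m : Fin (a + b)} (hm : IsTop m)
    (x : Fin (a + b) → ℝ) : potential b m x ≤ potential b m (Tab a b x) := by
  have hsum : ∑ j, Tab a b x j = ∑ j, subVec a b x j :=
    Equiv.sum_comp (Tuple.sort (subVec a b x)) _
  have htop : subVec a b x m ≤ Tab a b x m := le_comp_sort_of_isTop _ hm m
  rw [subVec_apply_of_le x (Fin.le_def.1 (hm ⟨a, by omega⟩)) (by omega)] at htop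
  have hb' : (b : ℝ) ≠ 0 := Nat.cast_ne_zero.2 hb
  simp only [potential, hsum, sum_subVec hb, sub_div, mul_div_cancel_left₀ _ hb']
  linarith

theorem potential_iterate_Tab_le {a b : ℕ} {x : Fin (a + b) → ℝ} (hx : x ∈ Lambda (a + b))
    {m : Fin (a + b)} (hm : IsTop m) (k : ℕ) : potential b m ((Tab a b)^[k] x) ≤ x m :=
  (potential_le_apply b m (mapsTo_Tab.iterate k hx)).trans (iterate_Tab_apply_le_of_isTop hx hm k)

theorem statement5_general (a b : ℕ) (hb : 2 ≤ b) :
    ∃ E : Set (Fin (a + b) → ℝ), MeasurableSet E ∧ E ⊆ Lambda (a + b) ∧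
      volume (symmDiff (Lambda (a + b) ∩ Tab a b ⁻¹' E) E) = 0 ∧
      0 < volume E ∧ 0 < volume (Lambda (a + b) \ E) := by
  set m : Fin (a + b) := ⟨a + b - 1, by omega⟩
  have hm : IsTop m := fun j => Fin.le_def.2 (show (j : ℕ) ≤ a + b - 1 by omega)
  set W := ⋃ k, (Tab a b)^[k] ⁻¹' {x | 1 < potential b m x}
  have hW : Tab a b ⁻¹' W = W := preimage_iUnion_preimage_iterate fun x hx =>
    lt_of_lt_of_le hx (potential_le_potential_Tab (by omega) hm x)
  have hW_meas : MeasurableSet W := .iUnion fun k => measurableSet_lt measurable_const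
    ((continuous_potential m).measurable.comp (measurable_Tab.iterate k))
  have hW_sub : Lambda (a + b) ∩ {x | x m < 1} ⊆ Lambda (a + b) \ W := by
    rintro x ⟨hx, hxm⟩
    refine ⟨hx, fun hxW => ?_⟩
    obtain ⟨k, hk⟩ := mem_iUnion.1 hxW
    exact lt_asymm hxm (hk.out.trans_le (potential_iterate_Tab_le hx hm k))
  have h3 : 1 < potential b m (Pi.single m 3) := by
    have : (3 : ℝ) / b ≤ 3 / 2 := by gcongr; exact_mod_cast hb
    rw [potential_single]
    linarith
  refine ⟨Lambda (a + b) ∩ W, isClosed_Lambda.measurableSet.inter hW_meas, inter_subset_left,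
    ?_, ?_, ?_⟩
  · rw [preimage_inter, hW, ← inter_assoc, inter_eq_left.2 mapsTo_Tab.subset_preimage,
      symmDiff_self]
    exact measure_empty
  · exact (volume_Lambda_inter_pos (isOpen_lt continuous_const (continuous_potential m))
      ⟨_, single_mem_Lambda hm zero_le_three, h3⟩).trans_le
      (measure_mono (inter_subset_inter_right _ fun x hx => mem_iUnion.2 ⟨0, hx⟩))
  · exact (volume_Lambda_inter_pos (isOpen_lt (continuous_apply m) continuous_const)
      ⟨0, ⟨fun _ => le_rfl, monotone_const⟩, zero_lt_one (α := ℝ)⟩).trans_le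
      (measure_mono (hW_sub.trans_eq sdiff_self_inter.symm))

/-- for `a ≥ 1`, `b ≥ 2`, the map `T_{a,b} : Λ^{a+b} → Λ^{a+b}` is
not ergodic with respect to Lebesgue measure restricted to `Λ^{a+b}`. -/
theorem statement5 (a b : ℕ) (ha : 1 ≤ a) (hb : 2 ≤ b) :
    ∃ E : Set (Fin (a + b) → ℝ), MeasurableSet E ∧ E ⊆ Lambda (a + b) ∧
      volume (symmDiff (Lambda (a + b) ∩ Tab a b ⁻¹' E) E) = 0 ∧
      0 < volume E ∧ 0 < volume (Lambda (a + b) \ E) :=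
  statement5_general a b hb
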